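/- (The doubling-degeneracy machine construction saturates the Landauer limit.) For θ > 0 and integers N > θ, set ε := θ/N, r := (1−ε)/2, Z_N := (∑_{n=0}^{N} 2^n r^n) + r^N, and λ_n := r^n/Z_N for 0 ≤ n ≤ N. Define the dissipated heat Q_N := log(2/(1−ε)) · ∑_{n=1}^{N} n · 2^n · ((λ_{n−1} + λ_N)/2 − λ_n). Then lim_{N→∞} Q_N = log 2. -/

import Mathlib

/-!
For any populations `p`, Abel summation turns the heat sum
`∑_{n=1}^N n 2^n ((p_{n-1} + p_N)/2 - p_n)` into `(∑_{m=0}^N 2^m p_m + p_N) - 2^(N+1) p_N`; for the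
thermal populations the first term is the normalisation `1`. With `x = 2r = 1 - ε ∈ [0, 1]` we have
`2^(N+1) λ_N = 2 x^N / Z_N` and `Z_N ≥ ∑_{m=0}^N x^m ≥ (N+1) x^N`, so
`Q_N = log (2/(1-ε)) · (1 - O(1/N)) → log 2`.
-/

open Filter

/-- Gibbs ratio `r = (1−ε)/2` with `ε = θ/N`. -/
noncomputable def gibbsRatio (θ : ℝ) (N : ℕ) : ℝ := (1 - θ / N) / 2

/-- Partition function `Z_N = (∑_{n=0}^N 2^n r^n) + r^N` of the doubling-degeneracy machine. -/
noncomputable def ZN (θ : ℝ) (N : ℕ) : ℝ :=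
  (∑ m ∈ Finset.range (N + 1), (2 : ℝ) ^ m * gibbsRatio θ N ^ m) + gibbsRatio θ N ^ N

/-- Thermal population `λ_n = r^n / Z_N` of each level-`n` eigenstate. -/
noncomputable def lamN (θ : ℝ) (N n : ℕ) : ℝ := gibbsRatio θ N ^ n / ZN θ N

open Finset

section HeatSum

variable {K : Type*}

theorem sum_range_mul_sub_two_mul_eq [CommRing K] (p : ℕ → K) (c : K) (N : ℕ) :
    ∑ k ∈ range N, ((k : K) + 1) * 2 ^ k * (p k + c - 2 * p (k + 1))
      = ∑ k ∈ range N, 2 ^ k * p k - N * 2 ^ N * p N + c * ((N - 1) * 2 ^ N + 1) := by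
  induction N with
  | zero => simp
  | succ N ih =>
    rw [sum_range_succ, ih, sum_range_succ]
    push_cast
    ring

theorem sum_Icc_heat_eq [Field K] [NeZero (2 : K)] (p : ℕ → K) (N : ℕ) :
    ∑ n ∈ Icc 1 N, (n : K) * 2 ^ n * ((p (n - 1) + p N) / 2 - p n)
      = (∑ m ∈ range (N + 1), 2 ^ m * p m + p N) - 2 ^ (N + 1) * p N := by
  have hshift : ∑ n ∈ Icc 1 N, (n : K) * 2 ^ n * ((p (n - 1) + p N) / 2 - p n)
      = ∑ k ∈ range N, ((k : K) + 1) * 2 ^ k * (p k + p N - 2 * p (k + 1)) := by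
    rw [← Ico_add_one_right_eq_Icc, sum_Ico_eq_sum_range, Nat.add_sub_cancel]
    refine sum_congr rfl fun k _ => ?_
    rw [add_comm 1 k, Nat.add_sub_cancel]
    field_simp
    push_cast
    ring
  rw [hshift, sum_range_mul_sub_two_mul_eq, sum_range_succ]
  ring

end HeatSum

theorem natCast_add_one_mul_pow_le_geom_sum {x : ℝ} (hx₀ : 0 ≤ x) (hx₁ : x ≤ 1) (n : ℕ) :
    ((n : ℝ) + 1) * x ^ n ≤ ∑ m ∈ range (n + 1), x ^ m :=
  calc ((n : ℝ) + 1) * x ^ n = ∑ _m ∈ range (n + 1), x ^ n := by simp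
    _ ≤ ∑ m ∈ range (n + 1), x ^ m :=
      sum_le_sum fun m hm => pow_le_pow_of_le_one hx₀ hx₁ (Nat.lt_succ_iff.mp (mem_range.mp hm))

section Machine

variable {θ : ℝ} {N : ℕ}

theorem two_mul_gibbsRatio : 2 * gibbsRatio θ N = 1 - θ / N := by
  unfold gibbsRatio
  ring

theorem one_sub_div_mem_Icc (hθ : 0 ≤ θ) (hθN : θ ≤ N) : 1 - θ / N ∈ Set.Icc (0 : ℝ) 1 := by
  refine ⟨?_, sub_le_self _ (by positivity)⟩
  rcases N.eq_zero_or_pos with rfl | hN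
  · simp
  · rw [sub_nonneg, div_le_one (by exact_mod_cast hN)]
    exact hθN

theorem ZN_eq_geom_sum_add :
    ZN θ N = ∑ m ∈ range (N + 1), (1 - θ / N) ^ m + gibbsRatio θ N ^ N := by
  simp only [ZN, ← mul_pow, two_mul_gibbsRatio]

theorem gibbsRatio_nonneg (hθ : 0 ≤ θ) (hθN : θ ≤ N) : 0 ≤ gibbsRatio θ N := by
  rw [← mul_nonneg_iff_of_pos_left two_pos, two_mul_gibbsRatio]
  exact (one_sub_div_mem_Icc hθ hθN).1

theorem ZN_pos (hθ : 0 ≤ θ) (hθN : θ ≤ N) : 0 < ZN θ N := by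
  have hx₀ := (one_sub_div_mem_Icc hθ hθN).1
  have hone : (1 - θ / N) ^ 0 ≤ ∑ m ∈ range (N + 1), (1 - θ / N) ^ m :=
    single_le_sum (fun m _ => pow_nonneg hx₀ m) (mem_range.mpr N.succ_pos)
  rw [pow_zero] at hone
  rw [ZN_eq_geom_sum_add]
  have := gibbsRatio_nonneg hθ hθN
  positivity

theorem sum_two_pow_mul_lamN_add_lamN (hZ : ZN θ N ≠ 0) :
    ∑ m ∈ range (N + 1), 2 ^ m * lamN θ N m + lamN θ N N = 1 := by
  simp only [lamN, mul_div_assoc', ← sum_div, ← add_div]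
  exact div_self hZ

theorem two_pow_mul_lamN_self :
    2 ^ (N + 1) * lamN θ N N = 2 * (1 - θ / N) ^ N / ZN θ N := by
  rw [lamN, ← two_mul_gibbsRatio, mul_pow, pow_succ']
  ring

theorem two_pow_mul_lamN_self_mem_Icc (hθ : 0 ≤ θ) (hθN : θ ≤ N) :
    2 ^ (N + 1) * lamN θ N N ∈ Set.Icc 0 (2 / ((N : ℝ) + 1)) := by
  obtain ⟨hx₀, hx₁⟩ := one_sub_div_mem_Icc hθ hθN
  have hZ := ZN_pos hθ hθN
  rw [two_pow_mul_lamN_self]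
  refine ⟨by positivity, ?_⟩
  rw [div_le_div_iff₀ hZ (by positivity), ZN_eq_geom_sum_add]
  nlinarith [natCast_add_one_mul_pow_le_geom_sum hx₀ hx₁ N,
    pow_nonneg (gibbsRatio_nonneg hθ hθN) N]

end Machine

theorem tendsto_two_pow_mul_lamN_self {θ : ℝ} (hθ : 0 ≤ θ) :
    Tendsto (fun N : ℕ => 2 ^ (N + 1) * lamN θ N N) atTop (nhds 0) := by
  have hbound : Tendsto (fun N : ℕ => 2 / ((N : ℝ) + 1)) atTop (nhds 0) := by
    simpa only [mul_one_div, mul_zero] using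
      tendsto_one_div_add_atTop_nhds_zero_nat.const_mul (2 : ℝ)
  have hmem : ∀ᶠ N : ℕ in atTop, 2 ^ (N + 1) * lamN θ N N ∈ Set.Icc 0 (2 / ((N : ℝ) + 1)) :=
    (tendsto_natCast_atTop_atTop.eventually_ge_atTop θ).mono fun _ hθN =>
      two_pow_mul_lamN_self_mem_Icc hθ hθN
  exact tendsto_of_tendsto_of_tendsto_of_le_of_le' tendsto_const_nhds hbound
    (hmem.mono fun _ h => h.1) (hmem.mono fun _ h => h.2)

theorem tendsto_log_two_div_one_sub_div (θ : ℝ) :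
    Tendsto (fun N : ℕ => Real.log (2 / (1 - θ / N))) atTop (nhds (Real.log 2)) := by
  have hx : Tendsto (fun N : ℕ => 1 - θ / (N : ℝ)) atTop (nhds 1) := by
    simpa using tendsto_const_nhds.sub
      (tendsto_const_nhds.div_atTop (tendsto_natCast_atTop_atTop (R := ℝ)))
  have h2 := (tendsto_const_nhds (x := (2 : ℝ))).div hx one_ne_zero
  rw [div_one] at h2
  exact h2.log two_ne_zero

/-- The doubling-degeneracy machine construction saturates the Landauer
limit: the dissipated heat `Q_N` converges to `log 2` as `N → ∞`. -/
theorem doubling_degeneracy_landauer (θ : ℝ) (hθ : 0 < θ) :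
    Tendsto (fun N : ℕ =>
        Real.log (2 / (1 - θ / N)) *
          ∑ n ∈ Finset.Icc 1 N,
            (n : ℝ) * 2 ^ n * ((lamN θ N (n - 1) + lamN θ N N) / 2 - lamN θ N n))
      atTop (nhds (Real.log 2)) := by
  have hlim := (tendsto_log_two_div_one_sub_div θ).mul
    ((tendsto_const_nhds (x := (1 : ℝ))).sub (tendsto_two_pow_mul_lamN_self hθ.le))
  rw [sub_zero, mul_one] at hlim
  refine hlim.congr' ?_
  filter_upwards [tendsto_natCast_atTop_atTop.eventually_ge_atTop θ] with N hθN
  rw [sum_Icc_heat_eq, sum_two_pow_mul_lamN_add_lamN (ZN_pos hθ.le hθN).ne']
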